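/- arXiv:2309.07655 — 2 statements merged into one kernel-verified Lean document; each statement's English description precedes it below -/
import Mathlib

section
/- Suppose f : ℝ → ℂ has the form f(t) = ∑_{k,l=1}^{n} c_{k,l} e^{𝑖μ_{kl}t} with μ_{kl} = λ_k − λ_l for reals λ_j, and let p ≥ 1. If coefficients b_1,…,b_m and shifts ϕ_1,…,ϕ_m satisfy ∑_{x=1}^m b_x e^{𝑖μ_{kl}ϕ_x} = (𝑖μ_{kl})^p for all k,l, then the p-th derivative satisfies f^{(p)}(t) = ∑_{x=1}^m b_x f(t+ϕ_x) for all t. -/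
lemma hasDerivAt_cexp_mul (μ : ℂ) (t : ℝ) :
    HasDerivAt (fun s : ℝ => Complex.exp (Complex.I * μ * (s : ℂ)))
      (Complex.I * μ * Complex.exp (Complex.I * μ * (t : ℂ))) t := by
  have h1 : HasDerivAt (fun s : ℝ => Complex.I * μ * (s : ℂ)) (Complex.I * μ) t := by
    simpa using (Complex.ofRealCLM.hasDerivAt (x := t)).const_mul (Complex.I * μ)
  simpa [mul_comm] using h1.cexp

lemma iteratedDeriv_trig (n : ℕ) (c : Fin n → Fin n → ℂ) (μ : Fin n → Fin n → ℂ)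
    (f : ℝ → ℂ)
    (hf : ∀ t : ℝ, f t = ∑ k : Fin n, ∑ l : Fin n,
      c k l * Complex.exp (Complex.I * μ k l * (t : ℂ))) (p : ℕ) (t : ℝ) :
    iteratedDeriv p f t = ∑ k : Fin n, ∑ l : Fin n,
      c k l * (Complex.I * μ k l) ^ p * Complex.exp (Complex.I * μ k l * (t : ℂ)) := by
  induction p generalizing t with
  | zero => simp [hf t]
  | succ p ih =>
    rw [iteratedDeriv_succ]
    have hfun : iteratedDeriv p f = fun s : ℝ => ∑ k : Fin n, ∑ l : Fin n,
        c k l * (Complex.I * μ k l) ^ p * Complex.exp (Complex.I * μ k l * (s : ℂ)) :=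
      funext fun s => ih s
    rw [hfun]
    have hd : HasDerivAt (fun s : ℝ => ∑ k : Fin n, ∑ l : Fin n,
        c k l * (Complex.I * μ k l) ^ p * Complex.exp (Complex.I * μ k l * (s : ℂ)))
        (∑ k : Fin n, ∑ l : Fin n,
          c k l * (Complex.I * μ k l) ^ (p + 1) * Complex.exp (Complex.I * μ k l * (t : ℂ))) t := by
      refine HasDerivAt.fun_sum (F := ℂ) fun k _ => HasDerivAt.fun_sum (F := ℂ) fun l _ => ?_
      have := (hasDerivAt_cexp_mul (μ k l) t).const_mul (c k l * (Complex.I * μ k l) ^ p)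
      refine this.congr_deriv ?_
      ring
    exact hd.deriv

/-- Higher-order parameter-shift rule: if `f(t) = ∑_{k,l} c_{k,l} e^{iμ_{kl}t}` with
`μ_{kl} = λ_k - λ_l`, and `∑_x b_x e^{iμ_{kl}ϕ_x} = (iμ_{kl})^p` for all `k, l`, then
`f^{(p)}(t) = ∑_x b_x f(t + ϕ_x)` for all `t`. -/
theorem higher_order_parameter_shift_rule (n m p : ℕ) (hp : 1 ≤ p)
    (c : Fin n → Fin n → ℂ) (lam : Fin n → ℝ)
    (b : Fin m → ℂ) (phi : Fin m → ℝ) (f : ℝ → ℂ)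
    (hf : ∀ t : ℝ, f t = ∑ k : Fin n, ∑ l : Fin n,
      c k l * Complex.exp (Complex.I * ((lam k - lam l : ℝ) : ℂ) * (t : ℂ)))
    (hcomp : ∀ k l : Fin n,
      ∑ x : Fin m, b x * Complex.exp (Complex.I * ((lam k - lam l : ℝ) : ℂ) * ((phi x : ℝ) : ℂ)) =
        (Complex.I * ((lam k - lam l : ℝ) : ℂ)) ^ p) :
    ∀ t : ℝ, iteratedDeriv p f t = ∑ x : Fin m, b x * f (t + phi x) := by
  intro t
  rw [iteratedDeriv_trig n c (fun k l => ((lam k - lam l : ℝ) : ℂ)) f hf p t]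
  have hrhs : ∀ x : Fin m, b x * f (t + phi x) = ∑ k : Fin n, ∑ l : Fin n,
      c k l * (b x * Complex.exp (Complex.I * ((lam k - lam l : ℝ) : ℂ) * ((phi x : ℝ) : ℂ)))
        * Complex.exp (Complex.I * ((lam k - lam l : ℝ) : ℂ) * (t : ℂ)) := by
    intro x
    rw [hf (t + phi x), Finset.mul_sum]
    refine Finset.sum_congr rfl fun k _ => ?_
    rw [Finset.mul_sum]
    refine Finset.sum_congr rfl fun l _ => ?_
    push_cast
    rw [mul_add, Complex.exp_add]
    ring
  calc ∑ k : Fin n, ∑ l : Fin n,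
        c k l * (Complex.I * ((lam k - lam l : ℝ) : ℂ)) ^ p
          * Complex.exp (Complex.I * ((lam k - lam l : ℝ) : ℂ) * (t : ℂ))
      = ∑ k : Fin n, ∑ l : Fin n, ∑ x : Fin m,
        c k l * (b x * Complex.exp (Complex.I * ((lam k - lam l : ℝ) : ℂ) * ((phi x : ℝ) : ℂ)))
          * Complex.exp (Complex.I * ((lam k - lam l : ℝ) : ℂ) * (t : ℂ)) := by
        refine Finset.sum_congr rfl fun k _ => Finset.sum_congr rfl fun l _ => ?_
        rw [← hcomp k l, Finset.mul_sum, Finset.sum_mul]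
    _ = ∑ x : Fin m, b x * f (t + phi x) := by
        have h1 : ∀ k : Fin n, ∑ l : Fin n, ∑ x : Fin m,
            c k l * (b x * Complex.exp (Complex.I * ((lam k - lam l : ℝ) : ℂ) * ((phi x : ℝ) : ℂ)))
              * Complex.exp (Complex.I * ((lam k - lam l : ℝ) : ℂ) * (t : ℂ))
            = ∑ x : Fin m, ∑ l : Fin n,
            c k l * (b x * Complex.exp (Complex.I * ((lam k - lam l : ℝ) : ℂ) * ((phi x : ℝ) : ℂ)))
              * Complex.exp (Complex.I * ((lam k - lam l : ℝ) : ℂ) * (t : ℂ)) :=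
          fun k => Finset.sum_comm
        rw [Finset.sum_congr rfl fun k _ => h1 k, Finset.sum_comm]
        refine Finset.sum_congr rfl fun x _ => (hrhs x).symm
end

section
/- For f(t) = a_0 + a cos(Ωt) + b sin(Ωt) with Ω > 0 and any ϕ ∈ (0, π/Ω) with sin(Ωϕ) ≠ 0, the two-term parameter-shift rule holds: f'(t) = (Ω / (2 sin(Ωϕ)))·(f(t+ϕ) − f(t−ϕ)) for all t. -/
/-- The two-term parameter-shift rule for a single-frequency trigonometric function. -/
theorem two_term_parameter_shift_rule (a0 a b Ω : ℝ) (hΩ : 0 < Ω) (φ : ℝ)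
    (hφ : φ ∈ Set.Ioo 0 (Real.pi / Ω)) (hsin : Real.sin (Ω * φ) ≠ 0)
    (f : ℝ → ℝ) (hf : ∀ t, f t = a0 + a * Real.cos (Ω * t) + b * Real.sin (Ω * t)) :
    ∀ t, deriv f t = Ω / (2 * Real.sin (Ω * φ)) * (f (t + φ) - f (t - φ)) := by
  have hfe : f = fun t => a0 + a * Real.cos (Ω * t) + b * Real.sin (Ω * t) := funext hf
  subst hfe
  intro t
  have h : HasDerivAt (fun t => a0 + a * Real.cos (Ω * t) + b * Real.sin (Ω * t))
      (a * (-Real.sin (Ω * t) * Ω) + b * (Real.cos (Ω * t) * Ω)) t := by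
    have h1 : HasDerivAt (fun t : ℝ => Ω * t) Ω t := by
      simpa using (hasDerivAt_id t).const_mul Ω
    exact (((hasDerivAt_const t a0).add ((h1.cos.const_mul a))).add (h1.sin.const_mul b)).congr_deriv (by ring)
  rw [h.deriv]
  simp only [mul_add, Real.cos_add, Real.sin_add, mul_sub, Real.cos_sub, Real.sin_sub]
  field_simp
  ring
end
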